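/- arXiv:1903.10114 — 2 statements merged into one kernel-verified Lean document; each statement's English description precedes it below -/
import Mathlib

section
/- The Weyl set is a closed disc with explicit center and radius: Let r ≥ 1, α ∈ ℂ, β ∈ ℂ^{1×r}, γ ∈ ℂ^{r×1}, and δ ∈ ℂ^{r×r} with I := Im(δ) positive definite. Then for every A ∈ ℂ^{r×r} with Im(A) positive semidefinite the matrix 1_r − δA is invertible, and the closure of the set { α + βA(1_r − δA)^{-1}γ : A ∈ ℂ^{r×r}, Im(A) positive semidefinite } ⊂ ℂ equals the closed disc with center α + (i/2)·βI^{-1}γ and radius (1/2)·‖I^{-1/2}β^*‖·‖I^{-1/2}γ‖, where ‖·‖ is the Euclidean norm on ℂ^r. -/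
/-!
With `B = A (1 - δA)⁻¹` and `C = (1 - δA)⁻¹ = 1 + δB` one has
`C^* (Im A) C = Im B - B^* (Im δ) B`, so `A ↦ B` maps `{Im A ≥ 0}` into
`{Im B - B^* (Im δ) B ≥ 0}` and, with inverse `B ↦ B (1 + δB)⁻¹`, onto the part where this
matrix is positive definite. Writing `B = J ((i/2)(1 + T)) J` with `J = (Im δ)^{-1/2}` turns
`Im B - B^* (Im δ) B` into `J (1 - T^*T) J / 4` and the Weyl value into `c + (i/2) u^* T v`,
where `c` is the claimed center, `u = J β^*` and `v = J γ`. For contractions `T`,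
Cauchy–Schwarz bounds `|u^* T v|` by `‖u‖ ‖v‖`, and the strict contractions `k u v^*` already
fill the open disc of that radius.
-/

open Matrix
open scoped ComplexOrder

noncomputable section

/-- The imaginary part `(M − M^*)/(2i)` of a square complex matrix. -/
def matIm {n : Type*} (M : Matrix n n ℂ) : Matrix n n ℂ :=
  (2 * Complex.I)⁻¹ • (M - Mᴴ)

/-- The Euclidean norm on `ℂ^r`. -/
def evnorm {r : ℕ} (v : Fin r → ℂ) : ℝ :=
  Real.sqrt (∑ i, Complex.normSq (v i))

/-- The square root of a positive semidefinite matrix, as defined in the older Mathlib. -/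
def Matrix.PosSemidef.sqrt {n : Type*} [Fintype n] [DecidableEq n] {A : Matrix n n ℂ}
    (hA : A.PosSemidef) : Matrix n n ℂ :=
  hA.1.eigenvectorUnitary.1 * diagonal ((↑) ∘ (√·) ∘ hA.1.eigenvalues) *
    (star hA.1.eigenvectorUnitary : Matrix n n ℂ)

namespace Matrix.PosSemidef

variable {n : Type*} [Fintype n] [DecidableEq n] {A : Matrix n n ℂ}

open scoped MatrixOrder in
lemma sqrt_eq_cfcSqrt (hA : A.PosSemidef) : hA.sqrt = CFC.sqrt A := by
  rw [CFC.sqrt_eq_real_sqrt A hA.nonneg, cfcₙ_eq_cfc, hA.1.cfc_eq, IsHermitian.cfc,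
    Unitary.conjStarAlgAut_apply]
  rfl

open scoped MatrixOrder in
lemma sqrt_mul_self (hA : A.PosSemidef) : hA.sqrt * hA.sqrt = A := by
  rw [sqrt_eq_cfcSqrt, CFC.sqrt_mul_sqrt_self A hA.nonneg]

open scoped MatrixOrder in
lemma conjTranspose_sqrt (hA : A.PosSemidef) : hA.sqrtᴴ = hA.sqrt := by
  rw [sqrt_eq_cfcSqrt]
  exact (CFC.sqrt_nonneg A).isSelfAdjoint

end Matrix.PosSemidef

namespace Matrix.PosDef

variable {n : Type*} [Fintype n] [DecidableEq n] {A : Matrix n n ℂ}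

lemma conjTranspose_inv_sqrt (hA : A.PosDef) :
    hA.posSemidef.sqrt⁻¹ᴴ = hA.posSemidef.sqrt⁻¹ := by
  rw [conjTranspose_nonsing_inv, hA.posSemidef.conjTranspose_sqrt]

lemma inv_sqrt_mul_mul_inv_sqrt (hA : A.PosDef) :
    hA.posSemidef.sqrt⁻¹ * A * hA.posSemidef.sqrt⁻¹ = 1 := by
  have hSS := hA.posSemidef.sqrt_mul_self
  have hA' := hA.isUnit
  generalize hA.posSemidef.sqrt = S at hSS ⊢
  subst hSS
  have hS := (isUnit_iff_isUnit_det S).mp (isUnit_of_mul_isUnit_right hA')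
  rw [← Matrix.mul_assoc, nonsing_inv_mul _ hS, Matrix.one_mul, mul_nonsing_inv _ hS]

end Matrix.PosDef

section MatIm

variable {n m : Type*}

lemma matIm_add (M N : Matrix n n ℂ) : matIm (M + N) = matIm M + matIm N := by
  simp only [matIm, conjTranspose_add, ← smul_add]
  abel_nf

lemma matIm_neg (M : Matrix n n ℂ) : matIm (-M) = -matIm M := by
  simp only [matIm, conjTranspose_neg, ← smul_neg]
  abel_nf

lemma matIm_sub (M N : Matrix n n ℂ) : matIm (M - N) = matIm M - matIm N := by
  rw [sub_eq_add_neg, matIm_add, matIm_neg, ← sub_eq_add_neg]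

lemma matIm_conjTranspose (M : Matrix n n ℂ) : matIm Mᴴ = -matIm M := by
  rw [matIm, matIm, conjTranspose_conjTranspose, ← smul_neg, neg_sub]

variable [Fintype n]

lemma matIm_conjTranspose_mul_mul [Fintype m] (M : Matrix n n ℂ) (P : Matrix n m ℂ) :
    matIm (Pᴴ * M * P) = Pᴴ * matIm M * P := by
  simp only [matIm, conjTranspose_mul, conjTranspose_conjTranspose, Matrix.mul_smul,
    Matrix.smul_mul, Matrix.mul_sub, Matrix.sub_mul, Matrix.mul_assoc]

lemma star_dotProduct_matIm_mulVec (M : Matrix n n ℂ) (x : n → ℂ) :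
    star x ⬝ᵥ matIm M *ᵥ x = ((star x ⬝ᵥ M *ᵥ x).im : ℂ) := by
  have hstar : star x ⬝ᵥ Mᴴ *ᵥ x = star (star x ⬝ᵥ M *ᵥ x) := by
    rw [dotProduct_mulVec, ← star_mulVec, star_dotProduct]
  rw [matIm, smul_mulVec, dotProduct_smul, sub_mulVec, dotProduct_sub, hstar, smul_eq_mul,
    Complex.star_def, Complex.sub_conj]
  field_simp
  push_cast
  ring

variable [DecidableEq n]

lemma matIm_inv {M : Matrix n n ℂ} (hM : IsUnit M) : matIm M⁻¹ = -(M⁻¹ᴴ * matIm M * M⁻¹) := by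
  have hdet := (isUnit_iff_isUnit_det M).mp hM
  have hM' : M⁻¹ = M⁻¹ᴴ * Mᴴ * M⁻¹ := by
    rw [← conjTranspose_mul, mul_nonsing_inv _ hdet, conjTranspose_one, Matrix.one_mul]
  rw [hM', matIm_conjTranspose_mul_mul, matIm_conjTranspose, Matrix.mul_neg, Matrix.neg_mul,
    ← hM']

lemma isUnit_of_posDef_matIm {M : Matrix n n ℂ} (hM : (matIm M).PosDef) : IsUnit M := by
  refine mulVec_injective_iff_isUnit.mp fun x y hxy => ?_
  by_contra hne
  have hpos := hM.dotProduct_mulVec_pos (sub_ne_zero.mpr hne)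
  rw [star_dotProduct_matIm_mulVec, mulVec_sub, hxy, sub_self, dotProduct_zero,
    Complex.zero_im, Complex.ofReal_zero] at hpos
  exact lt_irrefl 0 hpos

end MatIm

section LinearFractional

variable {n : Type*} [Fintype n] [DecidableEq n] {δ A B C : Matrix n n ℂ}

lemma isUnit_one_sub_mul (hδ : (matIm δ).PosDef) (hA : (matIm A).PosSemidef) :
    IsUnit (1 - δ * A) := by
  have hδu := isUnit_of_posDef_matIm hδ
  have hpos : (matIm (A - δ⁻¹)).PosDef := by
    rw [matIm_sub, matIm_inv hδu, sub_neg_eq_add, add_comm]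
    exact (hδ.conjTranspose_mul_mul_same
      (mulVec_injective_iff_isUnit.mpr (isUnit_nonsing_inv_iff.mpr hδu))).add_posSemidef hA
  have hfactor : 1 - δ * A = -(δ * (A - δ⁻¹)) := by
    rw [Matrix.mul_sub, mul_nonsing_inv _ ((isUnit_iff_isUnit_det δ).mp hδu)]
    abel
  rw [hfactor]
  exact (hδu.mul (isUnit_of_posDef_matIm hpos)).neg

lemma isUnit_one_add_mul (hB : (matIm B - Bᴴ * matIm δ * B).PosDef) : IsUnit (1 + δ * B) := by
  have hIm : matIm (-(Bᴴ * (1 + δ * B))) = matIm B - Bᴴ * matIm δ * B := by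
    rw [Matrix.mul_add, Matrix.mul_one, ← Matrix.mul_assoc, matIm_neg, matIm_add,
      matIm_conjTranspose, matIm_conjTranspose_mul_mul]
    abel
  rw [← hIm] at hB
  exact isUnit_of_mul_isUnit_right ((IsUnit.neg_iff _).mp (isUnit_of_posDef_matIm hB))

lemma conjTranspose_mul_matIm_mul_of_eq (hC : C = 1 + δ * B) (hAC : A * C = B) :
    Cᴴ * matIm A * C = matIm B - Bᴴ * matIm δ * B := by
  rw [← matIm_conjTranspose_mul_mul, Matrix.mul_assoc, hAC, hC, conjTranspose_add,
    conjTranspose_one, conjTranspose_mul, Matrix.add_mul, Matrix.one_mul, matIm_add,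
    matIm_conjTranspose_mul_mul, matIm_conjTranspose, Matrix.mul_neg, Matrix.neg_mul,
    sub_eq_add_neg]

lemma posSemidef_matIm_mul_inv_sub (h : IsUnit (1 - δ * A)) (hA : (matIm A).PosSemidef) :
    (matIm (A * (1 - δ * A)⁻¹) -
      (A * (1 - δ * A)⁻¹)ᴴ * matIm δ * (A * (1 - δ * A)⁻¹)).PosSemidef := by
  have hC : (1 - δ * A)⁻¹ = 1 + δ * (A * (1 - δ * A)⁻¹) := by
    have hinv := mul_nonsing_inv _ ((isUnit_iff_isUnit_det _).mp h)
    rw [Matrix.sub_mul, Matrix.one_mul, Matrix.mul_assoc] at hinv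
    exact eq_add_of_sub_eq hinv
  rw [← conjTranspose_mul_matIm_mul_of_eq hC rfl]
  exact hA.conjTranspose_mul_mul_same _

lemma exists_posSemidef_matIm_mul_inv_eq (hB : (matIm B - Bᴴ * matIm δ * B).PosDef) :
    ∃ A, (matIm A).PosSemidef ∧ A * (1 - δ * A)⁻¹ = B := by
  have hD := isUnit_one_add_mul hB
  set D := 1 + δ * B with hD_def
  have hdet := (isUnit_iff_isUnit_det D).mp hD
  have hAD : B * D⁻¹ * D = B := by
    rw [Matrix.mul_assoc, nonsing_inv_mul _ hdet, Matrix.mul_one]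
  have hinv : (1 - δ * (B * D⁻¹))⁻¹ = D := by
    have : 1 - δ * (B * D⁻¹) = D⁻¹ := by
      calc 1 - δ * (B * D⁻¹) = (D - δ * B) * D⁻¹ := by
            rw [Matrix.sub_mul, mul_nonsing_inv _ hdet, Matrix.mul_assoc]
        _ = D⁻¹ := by rw [hD_def, add_sub_cancel_right, Matrix.one_mul]
    rw [this, nonsing_inv_nonsing_inv _ hdet]
  refine ⟨B * D⁻¹, ?_, by rw [hinv, hAD]⟩
  rw [← conjTranspose_mul_matIm_mul_of_eq rfl hAD, ← star_eq_conjTranspose] at hB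
  exact ((Matrix.IsUnit.posDef_star_left_conjugate_iff hD).mp hB).posSemidef

end LinearFractional

section Normalization

variable {n : Type*} [Fintype n] [DecidableEq n] {δ J : Matrix n n ℂ}

lemma four_smul_matIm_sub_conjTranspose_mul_self (T : Matrix n n ℂ) :
    (4 : ℂ) • (matIm ((Complex.I / 2) • (1 + T)) -
      ((Complex.I / 2) • (1 + T))ᴴ * ((Complex.I / 2) • (1 + T))) = 1 - Tᴴ * T := by
  simp only [matIm, conjTranspose_smul, conjTranspose_add, conjTranspose_one, Complex.star_def,
    map_div₀, Complex.conj_I, Complex.conj_ofNat, Matrix.smul_mul, Matrix.mul_smul,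
    Matrix.add_mul, Matrix.mul_add, Matrix.one_mul, Matrix.mul_one, smul_smul, smul_sub,
    smul_add]
  match_scalars
  all_goals field_simp; ring_nf; norm_num [Complex.I_sq]

lemma posSemidef_mul_mul_iff (hJ : Jᴴ = J) (hJu : IsUnit J) {Y : Matrix n n ℂ} :
    (J * Y * J).PosSemidef ↔ Y.PosSemidef := by
  nth_rewrite 1 [← hJ]
  exact Matrix.IsUnit.posSemidef_star_left_conjugate_iff hJu

lemma posDef_mul_mul_iff (hJ : Jᴴ = J) (hJu : IsUnit J) {Y : Matrix n n ℂ} :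
    (J * Y * J).PosDef ↔ Y.PosDef := by
  nth_rewrite 1 [← hJ]
  exact Matrix.IsUnit.posDef_star_left_conjugate_iff hJu

lemma matIm_mul_mul_sub (hJ : Jᴴ = J) (hJδ : J * matIm δ * J = 1) (X : Matrix n n ℂ) :
    matIm (J * X * J) - (J * X * J)ᴴ * matIm δ * (J * X * J) = J * (matIm X - Xᴴ * X) * J := by
  have hIm : matIm (J * X * J) = J * matIm X * J := by
    simpa only [hJ] using matIm_conjTranspose_mul_mul X J
  have hquad : (J * X * J)ᴴ * matIm δ * (J * X * J) = J * (Xᴴ * X) * J := by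
    calc (J * X * J)ᴴ * matIm δ * (J * X * J)
        = J * Xᴴ * (J * matIm δ * J) * X * J := by
          simp only [conjTranspose_mul, hJ, Matrix.mul_assoc]
      _ = J * (Xᴴ * X) * J := by
          rw [hJδ, Matrix.mul_one]
          simp only [Matrix.mul_assoc]
  rw [hIm, hquad, Matrix.mul_sub, Matrix.sub_mul]

lemma exists_contraction_mul_inv_eq (hJ : Jᴴ = J) (hJδ : J * matIm δ * J = 1)
    {A : Matrix n n ℂ} (h : IsUnit (1 - δ * A)) (hA : (matIm A).PosSemidef) :
    ∃ T : Matrix n n ℂ, (1 - Tᴴ * T).PosSemidef ∧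
      A * (1 - δ * A)⁻¹ = J * ((Complex.I / 2) • (1 + T)) * J := by
  have hJu : IsUnit J := IsUnit.of_mul_eq_one _ ((Matrix.mul_assoc _ _ _).symm.trans hJδ)
  have hJdet := (isUnit_iff_isUnit_det J).mp hJu
  set X := J⁻¹ * (A * (1 - δ * A)⁻¹) * J⁻¹
  have hX : J * X * J = A * (1 - δ * A)⁻¹ := by
    simp only [X, ← Matrix.mul_assoc, mul_nonsing_inv _ hJdet, Matrix.one_mul]
    rw [Matrix.mul_assoc, nonsing_inv_mul _ hJdet, Matrix.mul_one]
  have hXT : (Complex.I / 2) • (1 + ((-2 * Complex.I) • X - 1)) = X := by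
    rw [add_sub_cancel, smul_smul]
    field_simp
    simp [Complex.I_sq]
  refine ⟨(-2 * Complex.I) • X - 1, ?_, by rw [hXT, hX]⟩
  rw [← four_smul_matIm_sub_conjTranspose_mul_self, hXT]
  refine PosSemidef.smul ?_ (by norm_num)
  rw [← posSemidef_mul_mul_iff hJ hJu, ← matIm_mul_mul_sub hJ hJδ, hX]
  exact posSemidef_matIm_mul_inv_sub h hA

lemma exists_posSemidef_matIm_of_posDef_one_sub (hJ : Jᴴ = J) (hJδ : J * matIm δ * J = 1)
    {T : Matrix n n ℂ} (hT : (1 - Tᴴ * T).PosDef) :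
    ∃ A : Matrix n n ℂ, (matIm A).PosSemidef ∧
      A * (1 - δ * A)⁻¹ = J * ((Complex.I / 2) • (1 + T)) * J := by
  have hJu : IsUnit J := IsUnit.of_mul_eq_one _ ((Matrix.mul_assoc _ _ _).symm.trans hJδ)
  refine exists_posSemidef_matIm_mul_inv_eq ?_
  rw [matIm_mul_mul_sub hJ hJδ, posDef_mul_mul_iff hJ hJu,
    ← inv_smul_smul₀ (four_ne_zero' ℂ) (matIm _ - _), four_smul_matIm_sub_conjTranspose_mul_self]
  exact hT.smul (by norm_num)

end Normalization

lemma mul_conj_mul_apply {l n p : Type*} [Fintype n] {J : Matrix n n ℂ} (hJ : Jᴴ = J)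
    (β : Matrix l n ℂ) (X : Matrix n n ℂ) (γ : Matrix n p ℂ) (i : l) (j : p) :
    (β * (J * X * J) * γ) i j = star (J *ᵥ star (β i)) ⬝ᵥ X *ᵥ (J *ᵥ γᵀ j) := by
  rw [star_mulVec, star_star, hJ, ← dotProduct_mulVec, mulVec_mulVec, mulVec_mulVec,
    Matrix.mul_assoc β]
  simp [mul_apply, dotProduct, mulVec]

lemma closure_eq_closedBall_of_ball_subset {E : Type*} [NormedAddCommGroup E] [NormedSpace ℝ E]
    {s : Set E} {c : E} {ρ : ℝ} (hs : s ⊆ Metric.closedBall c ρ) (hball : Metric.ball c ρ ⊆ s)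
    (hc : c ∈ s) : closure s = Metric.closedBall c ρ := by
  refine (closure_minimal hs Metric.isClosed_closedBall).antisymm ?_
  rcases eq_or_ne ρ 0 with rfl | hρ
  · rw [Metric.closedBall_zero, Set.singleton_subset_iff]
    exact subset_closure hc
  · exact closure_ball c hρ ▸ closure_mono hball

section EuclideanNorm

variable {r : ℕ}

lemma evnorm_eq_norm (v : Fin r → ℂ) : evnorm v = ‖WithLp.toLp 2 v‖ := by
  simp [evnorm, EuclideanSpace.norm_eq, Complex.sq_norm]

lemma evnorm_nonneg (v : Fin r → ℂ) : 0 ≤ evnorm v := Real.sqrt_nonneg _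

lemma evnorm_pos {v : Fin r → ℂ} (hv : v ≠ 0) : 0 < evnorm v := by
  rw [evnorm_eq_norm, norm_pos_iff]
  exact fun h => hv (congrArg WithLp.ofLp h)

lemma evnorm_smul (c : ℂ) (v : Fin r → ℂ) : evnorm (c • v) = ‖c‖ * evnorm v := by
  rw [evnorm_eq_norm, evnorm_eq_norm, WithLp.toLp_smul, norm_smul]

lemma star_dotProduct_self (v : Fin r → ℂ) : star v ⬝ᵥ v = ((evnorm v ^ 2 : ℝ) : ℂ) := by
  have h := inner_self_eq_norm_sq_to_K (𝕜 := ℂ) (WithLp.toLp 2 v : EuclideanSpace ℂ (Fin r))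
  rw [EuclideanSpace.inner_eq_star_dotProduct, dotProduct_comm] at h
  rw [evnorm_eq_norm]
  exact_mod_cast h

lemma norm_star_dotProduct_le (u v : Fin r → ℂ) : ‖star u ⬝ᵥ v‖ ≤ evnorm u * evnorm v := by
  rw [evnorm_eq_norm, evnorm_eq_norm, dotProduct_comm]
  exact norm_inner_le_norm (𝕜 := ℂ) (WithLp.toLp 2 u) (WithLp.toLp 2 v)

lemma star_dotProduct_one_sub_mulVec (T : Matrix (Fin r) (Fin r) ℂ) (x : Fin r → ℂ) :
    star x ⬝ᵥ (1 - Tᴴ * T) *ᵥ x = ((evnorm x ^ 2 - evnorm (T *ᵥ x) ^ 2 : ℝ) : ℂ) := by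
  rw [sub_mulVec, dotProduct_sub, one_mulVec, ← mulVec_mulVec, dotProduct_mulVec, ← star_mulVec,
    star_dotProduct_self, star_dotProduct_self, Complex.ofReal_sub]

lemma evnorm_mulVec_le {T : Matrix (Fin r) (Fin r) ℂ} (hT : (1 - Tᴴ * T).PosSemidef)
    (x : Fin r → ℂ) : evnorm (T *ᵥ x) ≤ evnorm x := by
  have h := hT.dotProduct_mulVec_nonneg x
  rw [star_dotProduct_one_sub_mulVec, Complex.zero_le_real, sub_nonneg] at h
  exact pow_le_pow_iff_left₀ (evnorm_nonneg _) (evnorm_nonneg _) two_ne_zero |>.mp h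

lemma posDef_one_sub_of_evnorm_mulVec_lt {T : Matrix (Fin r) (Fin r) ℂ}
    (hT : ∀ x, x ≠ 0 → evnorm (T *ᵥ x) < evnorm x) : (1 - Tᴴ * T).PosDef := by
  refine PosDef.of_dotProduct_mulVec_pos ?_ fun x hx => ?_
  · simp [IsHermitian, conjTranspose_sub]
  · rw [star_dotProduct_one_sub_mulVec, Complex.zero_lt_real, sub_pos]
    exact pow_lt_pow_left₀ (hT x hx) (evnorm_nonneg _) two_ne_zero

lemma norm_star_dotProduct_mulVec_le {T : Matrix (Fin r) (Fin r) ℂ}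
    (hT : (1 - Tᴴ * T).PosSemidef) (u v : Fin r → ℂ) :
    ‖star u ⬝ᵥ T *ᵥ v‖ ≤ evnorm u * evnorm v :=
  (norm_star_dotProduct_le u (T *ᵥ v)).trans
    (mul_le_mul_of_nonneg_left (evnorm_mulVec_le hT v) (evnorm_nonneg u))

lemma exists_posDef_one_sub_star_dotProduct_mulVec_eq {u v : Fin r → ℂ} {z : ℂ}
    (hz : ‖z‖ < evnorm u * evnorm v ∨ z = 0) :
    ∃ T : Matrix (Fin r) (Fin r) ℂ, (1 - Tᴴ * T).PosDef ∧ star u ⬝ᵥ T *ᵥ v = z := by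
  rcases hz.symm with rfl | hz
  · exact ⟨0, by simpa using PosDef.one, by simp⟩
  have huv : 0 < evnorm u * evnorm v := (norm_nonneg z).trans_lt hz
  have hu : 0 < evnorm u := pos_of_mul_pos_left huv (evnorm_nonneg v)
  have hv : 0 < evnorm v := pos_of_mul_pos_right huv (evnorm_nonneg u)
  set k : ℂ := z / ((evnorm u ^ 2 * evnorm v ^ 2 : ℝ) : ℂ)
  have hTx : ∀ x, (k • vecMulVec u (star v)) *ᵥ x = (k * (star v ⬝ᵥ x)) • u := by
    intro x
    rw [smul_mulVec, vecMulVec_mulVec, op_smul_eq_smul, smul_smul]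
  have hk : ‖k‖ * (evnorm u * evnorm v) < 1 := by
    rw [norm_div, Complex.norm_real, Real.norm_of_nonneg (by positivity), div_mul_eq_mul_div,
      div_lt_one (by positivity)]
    nlinarith
  refine ⟨k • vecMulVec u (star v), posDef_one_sub_of_evnorm_mulVec_lt fun x hx => ?_, ?_⟩
  · calc evnorm ((k • vecMulVec u (star v)) *ᵥ x)
        = ‖k‖ * ‖star v ⬝ᵥ x‖ * evnorm u := by rw [hTx, evnorm_smul, norm_mul]
      _ ≤ ‖k‖ * (evnorm v * evnorm x) * evnorm u := by
          gcongr
          exact norm_star_dotProduct_le v x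
      _ = ‖k‖ * (evnorm u * evnorm v) * evnorm x := by ring
      _ < 1 * evnorm x := by gcongr; exact evnorm_pos hx
      _ = evnorm x := one_mul _
  · have hu' : (evnorm u : ℂ) ≠ 0 := by exact_mod_cast hu.ne'
    have hv' : (evnorm v : ℂ) ≠ 0 := by exact_mod_cast hv.ne'
    rw [hTx, dotProduct_smul, star_dotProduct_self, star_dotProduct_self, smul_eq_mul]
    simp only [k]
    push_cast
    field_simp

end EuclideanNorm

theorem weyl_set_is_closed_disc_general {r : ℕ} (α : ℂ)
    (β : Matrix (Fin 1) (Fin r) ℂ) (γ : Matrix (Fin r) (Fin 1) ℂ)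
    (δ : Matrix (Fin r) (Fin r) ℂ) (hI : (matIm δ).PosDef) :
    (∀ A : Matrix (Fin r) (Fin r) ℂ, (matIm A).PosSemidef → IsUnit (1 - δ * A)) ∧
    closure {w : ℂ | ∃ A : Matrix (Fin r) (Fin r) ℂ, (matIm A).PosSemidef ∧
        w = α + (β * A * (1 - δ * A)⁻¹ * γ) 0 0} =
      Metric.closedBall
        (α + (Complex.I / 2) * (β * (matIm δ)⁻¹ * γ) 0 0)
        ((1 / 2) *
          evnorm ((hI.posSemidef.sqrt)⁻¹.mulVec fun i => star (β 0 i)) *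
          evnorm ((hI.posSemidef.sqrt)⁻¹.mulVec fun i => γ i 0)) := by
  set J := hI.posSemidef.sqrt⁻¹
  have hJ : Jᴴ = J := hI.conjTranspose_inv_sqrt
  have hJδ : J * matIm δ * J = 1 := hI.inv_sqrt_mul_mul_inv_sqrt
  set u := J *ᵥ fun i => star (β 0 i)
  set v := J *ᵥ fun i => γ i 0
  set c := α + (Complex.I / 2) * (β * (matIm δ)⁻¹ * γ) 0 0
  have hvalue (A T : Matrix (Fin r) (Fin r) ℂ)
      (hAT : A * (1 - δ * A)⁻¹ = J * ((Complex.I / 2) • (1 + T)) * J) :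
      α + (β * A * (1 - δ * A)⁻¹ * γ) 0 0 = c + Complex.I / 2 * (star u ⬝ᵥ T *ᵥ v) := by
    have hinv : (matIm δ)⁻¹ = J * 1 * J :=
      inv_eq_left_inv (by rw [Matrix.mul_one, Matrix.mul_assoc, mul_eq_one_comm.mp hJδ])
    simp only [c]
    rw [Matrix.mul_assoc β A, hAT, mul_conj_mul_apply hJ, hinv, mul_conj_mul_apply hJ,
      smul_mulVec, add_mulVec, one_mulVec, dotProduct_smul, dotProduct_add, smul_eq_mul, mul_add,
      add_assoc]
    rfl
  have hmem (z : ℂ) (hz : ‖z‖ < evnorm u * evnorm v ∨ z = 0) :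
      c + Complex.I / 2 * z ∈ {w : ℂ | ∃ A : Matrix (Fin r) (Fin r) ℂ, (matIm A).PosSemidef ∧
        w = α + (β * A * (1 - δ * A)⁻¹ * γ) 0 0} := by
    obtain ⟨T, hT, rfl⟩ := exists_posDef_one_sub_star_dotProduct_mulVec_eq hz
    obtain ⟨A, hA, hAT⟩ := exists_posSemidef_matIm_of_posDef_one_sub hJ hJδ hT
    exact ⟨A, hA, (hvalue A T hAT).symm⟩
  refine ⟨fun A hA => isUnit_one_sub_mul hI hA, closure_eq_closedBall_of_ball_subset ?_ ?_ ?_⟩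
  · rintro _ ⟨A, hA, rfl⟩
    obtain ⟨T, hT, hAT⟩ := exists_contraction_mul_inv_eq hJ hJδ (isUnit_one_sub_mul hI hA) hA
    rw [Metric.mem_closedBall, dist_eq_norm, hvalue A T hAT, add_sub_cancel_left, norm_mul,
      norm_div, Complex.norm_I, Complex.norm_two, mul_assoc]
    exact mul_le_mul_of_nonneg_left (norm_star_dotProduct_mulVec_le hT u v) (by norm_num)
  · intro w hw
    rw [Metric.mem_ball, dist_eq_norm] at hw
    convert hmem (-2 * Complex.I * (w - c)) (Or.inl ?_) using 1
    · linear_combination (w - c) * Complex.I_sq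
    · rw [norm_mul, norm_mul, norm_neg, Complex.norm_I, Complex.norm_two]
      linarith
  · simpa using hmem 0 (Or.inr rfl)

/-- The Weyl set is a closed disc with explicit center and radius. -/
theorem weyl_set_is_closed_disc {r : ℕ} (hr : 1 ≤ r) (α : ℂ)
    (β : Matrix (Fin 1) (Fin r) ℂ) (γ : Matrix (Fin r) (Fin 1) ℂ)
    (δ : Matrix (Fin r) (Fin r) ℂ) (hI : (matIm δ).PosDef) :
    (∀ A : Matrix (Fin r) (Fin r) ℂ, (matIm A).PosSemidef → IsUnit (1 - δ * A)) ∧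
    closure {w : ℂ | ∃ A : Matrix (Fin r) (Fin r) ℂ, (matIm A).PosSemidef ∧
        w = α + (β * A * (1 - δ * A)⁻¹ * γ) 0 0} =
      Metric.closedBall
        (α + (Complex.I / 2) * (β * (matIm δ)⁻¹ * γ) 0 0)
        ((1 / 2) *
          evnorm ((hI.posSemidef.sqrt)⁻¹.mulVec fun i => star (β 0 i)) *
          evnorm ((hI.posSemidef.sqrt)⁻¹.mulVec fun i => γ i 0)) :=
  weyl_set_is_closed_disc_general α β γ δ hI

end
end

section
/- Positivity criterion for weak limit measures: Let Ω ⊆ ℝ be open, let w : Ω → [0,∞) be locally Lebesgue-integrable and Lebesgue-almost everywhere positive on Ω, let (μ_n) be finite positive Borel measures on ℝ converging weakly to a finite positive Borel measure μ (meaning ∫f dμ_n → ∫f dμ for every bounded continuous f : ℝ → ℝ), and let K ⊆ Ω be compact with positive Lebesgue measure. Set w(K) := ∫_K w(λ) dλ and let dμ_n/dλ denote the Radon–Nikodym derivative of μ_n with respect to Lebesgue measure. If liminf_{n→∞} (1/w(K)) ∫_K −log( (dμ_n/dλ)(λ) / w(λ) ) · w(λ) dλ < ∞, then μ(K) > 0.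 -/
open MeasureTheory Filter
open scoped ENNReal

noncomputable section

/-- The nonnegative (upper) part of an extended real, as an extended
nonnegative real. -/
def erealPos (x : EReal) : ℝ≥0∞ :=
  if x = ⊤ then ⊤ else ENNReal.ofReal x.toReal

/-- The integral of an extended-real-valued function, in the extended sense:
the (lower) integral of its positive part minus the (lower) integral of its
negative part. -/
def extIntegral (f : ℝ → EReal) (μ : Measure ℝ) : EReal :=
  ((∫⁻ x, erealPos (f x) ∂μ : ℝ≥0∞) : EReal) - ((∫⁻ x, erealPos (-(f x)) ∂μ : ℝ≥0∞) : EReal)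

/-- The entropy-type integrand `−log((dμ/dλ)(l)/w(l))·w(l)`, with values in
the extended reals (`log 0 = −∞`, `log ∞ = +∞`). -/
def entropyIntegrand (d : ℝ → ℝ≥0∞) (w : ℝ → ℝ) (l : ℝ) : EReal :=
  (-(ENNReal.log (d l / ENNReal.ofReal (w l)))) * ((w l : ℝ) : EReal)

@[simp] lemma erealPos_coe (x : ℝ) : erealPos (x : EReal) = ENNReal.ofReal x := by
  simp [erealPos]

@[simp] lemma erealPos_top : erealPos ⊤ = ⊤ := rfl

@[simp] lemma erealPos_bot : erealPos ⊥ = 0 := by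
  simp [erealPos]

@[simp] lemma erealPos_zero : erealPos 0 = 0 := by
  simpa using erealPos_coe 0

lemma real_key {x w t : ℝ} (hx : 0 < x) (hw : 0 < w) (ht : 0 < t) :
    (1 - Real.log t) * w + Real.log (x / w) * w ≤ x / t := by
  have hs : 0 < x / (t * w) := by positivity
  have h1 : Real.log (x / (t * w)) ≤ x / (t * w) - 1 := Real.log_le_sub_one_of_pos hs
  have h2 : x / w = (x / (t * w)) * t := by field_simp
  have h3 : Real.log (x / w) = Real.log (x / (t * w)) + Real.log t := by
    rw [h2, Real.log_mul (ne_of_gt hs) (ne_of_gt ht)]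
  have h4 : (x / (t * w)) * w = x / t := by field_simp
  nlinarith [mul_le_mul_of_nonneg_right h1 hw.le]

lemma negPart_le (d : ℝ≥0∞) {w : ℝ} (hw : 0 ≤ w) :
    erealPos (-((-(ENNReal.log (d / ENNReal.ofReal w))) * ((w : ℝ) : EReal))) ≤ d := by
  rw [EReal.neg_mul, neg_neg]
  rcases eq_or_lt_of_le hw with hw0 | hwpos
  · simp [← hw0]
  rcases eq_or_ne d 0 with rfl | hd0
  · simp [ENNReal.log_zero, EReal.bot_mul_of_pos (EReal.coe_pos.2 hwpos)]
  rcases eq_or_ne d ⊤ with rfl | hdtop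
  · simp
  have hx : 0 < d.toReal := ENNReal.toReal_pos hd0 hdtop
  have hd : d = ENNReal.ofReal d.toReal := (ENNReal.ofReal_toReal hdtop).symm
  rw [hd, ← ENNReal.ofReal_div_of_pos hwpos, ENNReal.log_ofReal_of_pos (by positivity),
    ← EReal.coe_mul, erealPos_coe]
  apply ENNReal.ofReal_le_ofReal
  have h1 : Real.log (d.toReal / w) ≤ d.toReal / w - 1 :=
    Real.log_le_sub_one_of_pos (by positivity)
  have h4 : (d.toReal / w) * w = d.toReal := by field_simp
  nlinarith [mul_le_mul_of_nonneg_right h1 hw]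

lemma key_pointwise (d : ℝ≥0∞) {w t : ℝ} (hw : 0 ≤ w) (ht0 : 0 < t) (ht1 : t ≤ 1) :
    ENNReal.ofReal ((1 - Real.log t) * w)
      + erealPos (-((-(ENNReal.log (d / ENNReal.ofReal w))) * ((w : ℝ) : EReal)))
    ≤ erealPos ((-(ENNReal.log (d / ENNReal.ofReal w))) * ((w : ℝ) : EReal))
      + d / ENNReal.ofReal t := by
  have hct : 0 ≤ 1 - Real.log t := by
    have := Real.log_nonpos ht0.le ht1; linarith
  rcases eq_or_lt_of_le hw with hw0 | hwpos
  · simp [← hw0]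
  rcases eq_or_ne d 0 with rfl | hd0
  · rw [ENNReal.zero_div, ENNReal.log_zero]
    simp [EReal.top_mul_of_pos (EReal.coe_pos.2 hwpos)]
  rcases eq_or_ne d ⊤ with rfl | hdtop
  · rw [EReal.neg_mul, neg_neg, ENNReal.top_div_of_ne_top ENNReal.ofReal_ne_top, ENNReal.log_top,
      EReal.top_mul_of_pos (EReal.coe_pos.2 hwpos)]
    simp [ENNReal.top_div_of_ne_top ENNReal.ofReal_ne_top]
  have hx : 0 < d.toReal := ENNReal.toReal_pos hd0 hdtop
  have hd : d = ENNReal.ofReal d.toReal := (ENNReal.ofReal_toReal hdtop).symm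
  set x := d.toReal with hxdef
  rw [hd, ← ENNReal.ofReal_div_of_pos hwpos, ENNReal.log_ofReal_of_pos (by positivity),
    ← ENNReal.ofReal_div_of_pos ht0]
  rw [show (-(Real.log (x / w) : EReal)) * ((w : ℝ) : EReal) = ((-Real.log (x / w) * w : ℝ) : EReal)
      from by rw [← EReal.coe_neg, ← EReal.coe_mul], ← EReal.coe_neg, erealPos_coe, erealPos_coe]
  have hkey : (1 - Real.log t) * w + Real.log (x / w) * w ≤ x / t := real_key hx hwpos ht0
  rcases le_or_gt (-Real.log (x / w) * w) 0 with hg | hg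
  · rw [ENNReal.ofReal_eq_zero.2 hg, zero_add,
      ← ENNReal.ofReal_add (mul_nonneg hct hw) (by linarith)]
    exact ENNReal.ofReal_le_ofReal (by linarith)
  · rw [show ENNReal.ofReal (-(-Real.log (x / w) * w)) = 0 from
      ENNReal.ofReal_eq_zero.2 (by linarith), add_zero,
      ← ENNReal.ofReal_add hg.le (by positivity)]
    exact ENNReal.ofReal_le_ofReal (by linarith)

/-- Positivity criterion for weak limit measures: if the entropy-type
integrals stay bounded along a subsequence, the weak limit gives positive
mass to `K`. -/
theorem pos_measure_of_entropy_bound {Ω : Set ℝ} (hΩ : IsOpen Ω)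
    (w : ℝ → ℝ) (hw0 : ∀ x ∈ Ω, 0 ≤ w x)
    (hwloc : LocallyIntegrableOn w Ω)
    (hwpos : ∀ᵐ x ∂(volume.restrict Ω), 0 < w x)
    (μ : ℕ → Measure ℝ) (ν : Measure ℝ)
    [∀ n, IsFiniteMeasure (μ n)] [IsFiniteMeasure ν]
    (hweak : ∀ f : BoundedContinuousFunction ℝ ℝ,
      Tendsto (fun n => ∫ x, f x ∂(μ n)) atTop (nhds (∫ x, f x ∂ν)))
    (K : Set ℝ) (hK : IsCompact K) (hKΩ : K ⊆ Ω) (hKpos : 0 < volume K)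
    (hbound : atTop.liminf (fun n =>
        (((∫ x in K, w x)⁻¹ : ℝ) : EReal) *
          extIntegral (entropyIntegrand ((μ n).rnDeriv volume) w) (volume.restrict K))
      < ⊤) :
    0 < ν K := by
  classical
  have hKm : MeasurableSet K := hK.measurableSet
  set W := ∫ x in K, w x with hWdef
  have hwK : IntegrableOn w K volume := hwloc.integrableOn_compact_subset hKΩ hK
  have haeK : ∀ᵐ x ∂(volume.restrict K), x ∈ K := ae_restrict_mem hKm
  have hw0K : ∀ᵐ x ∂(volume.restrict K), 0 ≤ w x := haeK.mono fun x hx => hw0 x (hKΩ hx)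
  have hwposK : ∀ᵐ x ∂(volume.restrict K), 0 < w x :=
    ae_mono (Measure.restrict_mono hKΩ le_rfl) hwpos
  -- the weight integral is positive
  have hW : 0 < W := by
    rw [hWdef, setIntegral_pos_iff_support_of_nonneg_ae hw0K hwK]
    have hnull : volume.restrict K {x | ¬ 0 < w x} = 0 := ae_iff.1 hwposK
    have h1 : volume K ≤ volume.restrict K {x | 0 < w x} + volume.restrict K {x | ¬ 0 < w x} := by
      have : volume K = volume.restrict K Set.univ := (Measure.restrict_apply_univ K).symm
      rw [this]
      refine le_trans (measure_mono ?_) (measure_union_le _ _)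
      intro y _
      by_cases h : 0 < w y
      · exact Or.inl h
      · exact Or.inr h
    rw [hnull, add_zero] at h1
    have h2 : volume.restrict K {x | 0 < w x} = volume ({x | 0 < w x} ∩ K) :=
      Measure.restrict_apply' hKm
    have h3 : volume ({x | 0 < w x} ∩ K) ≤ volume (Function.support w ∩ K) := by
      apply measure_mono
      intro y hy
      exact ⟨ne_of_gt hy.1, hy.2⟩
    exact lt_of_lt_of_le hKpos (h1.trans (h2.le.trans h3))
  have hwm : AEMeasurable w (volume.restrict K) :=
    (hwloc.aestronglyMeasurable.mono_measure (Measure.restrict_mono hKΩ le_rfl)).aemeasurable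
  obtain ⟨M, hM1, -⟩ := EReal.exists_between_coe_real hbound
  have hfreq : ∃ᶠ n in atTop,
      ((W⁻¹ : ℝ) : EReal) *
        extIntegral (entropyIntegrand ((μ n).rnDeriv volume) w) (volume.restrict K)
      < (M : EReal) := frequently_lt_of_liminf_lt (by isBoundedDefault) hM1
  set t := Real.exp (-(max M 0)) with htdef
  have ht0 : 0 < t := Real.exp_pos _
  have ht1 : t ≤ 1 := by
    rw [htdef, ← Real.exp_zero]
    exact Real.exp_le_exp.2 (neg_nonpos.2 (le_max_right M 0))
  have hlt : Real.log t = -(max M 0) := Real.log_exp _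
  have hct : 0 ≤ 1 - Real.log t := by
    have := Real.log_nonpos ht0.le ht1; linarith
  -- the key quantitative bound for each n in the frequent set
  have key : ∀ n : ℕ,
      ((W⁻¹ : ℝ) : EReal) *
        extIntegral (entropyIntegrand ((μ n).rnDeriv volume) w) (volume.restrict K)
        < (M : EReal) → ENNReal.ofReal (t * W) ≤ μ n K := by
    intro n hn
    set d := (μ n).rnDeriv volume with hddef
    have hdm : Measurable d := (μ n).measurable_rnDeriv volume
    set P := ∫⁻ x in K, erealPos (entropyIntegrand d w x) with hPdef
    set N := ∫⁻ x in K, erealPos (-(entropyIntegrand d w x)) with hNdef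
    set D := ∫⁻ x in K, d x with hDdef
    have hD : D ≤ μ n K := Measure.setLIntegral_rnDeriv_le K
    have hDtop : D ≠ ⊤ := (hD.trans_lt (measure_lt_top _ _)).ne
    have hN : N ≤ D := lintegral_mono_ae (hw0K.mono fun x hx => negPart_le (d x) hx)
    have hNtop : N ≠ ⊤ := (hN.trans_lt hDtop.lt_top).ne
    have hEdef : extIntegral (entropyIntegrand d w) (volume.restrict K)
        = ((P : ℝ≥0∞) : EReal) - ((N : ℝ≥0∞) : EReal) := rfl
    have hNcoe : ((N : ℝ≥0∞) : EReal) = ((N.toReal : ℝ) : EReal) := by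
      conv_lhs => rw [← ENNReal.ofReal_toReal hNtop]
      rw [EReal.coe_ennreal_ofReal, max_eq_left ENNReal.toReal_nonneg]
    have hPtop : P ≠ ⊤ := by
      intro hPt
      rw [hEdef, hPt, EReal.coe_ennreal_top, hNcoe, EReal.top_sub_coe,
        EReal.mul_top_of_pos (EReal.coe_pos.2 (inv_pos.2 hW))] at hn
      exact not_top_lt hn
    have hPcoe : ((P : ℝ≥0∞) : EReal) = ((P.toReal : ℝ) : EReal) := by
      conv_lhs => rw [← ENNReal.ofReal_toReal hPtop]
      rw [EReal.coe_ennreal_ofReal, max_eq_left ENNReal.toReal_nonneg]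
    have hn' : W⁻¹ * (P.toReal - N.toReal) < M := by
      rw [hEdef, hPcoe, hNcoe, ← EReal.coe_sub, ← EReal.coe_mul] at hn
      exact_mod_cast hn
    have hPN : P.toReal < M * W + N.toReal := by
      have h := mul_lt_mul_of_pos_left hn' hW
      rw [← mul_assoc, mul_inv_cancel₀ hW.ne', one_mul] at h
      linarith
    -- integrate the pointwise inequality
    have hmono : (∫⁻ x in K, (ENNReal.ofReal ((1 - Real.log t) * w x)
          + erealPos (-(entropyIntegrand d w x))))
        ≤ ∫⁻ x in K, (erealPos (entropyIntegrand d w x) + d x / ENNReal.ofReal t) :=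
      lintegral_mono_ae (hw0K.mono fun x hx => key_pointwise (d x) hx ht0 ht1)
    have hAmeas : AEMeasurable (fun x => ENNReal.ofReal ((1 - Real.log t) * w x))
        (volume.restrict K) :=
      ENNReal.measurable_ofReal.comp_aemeasurable (hwm.const_mul _)
    rw [lintegral_add_left' hAmeas, lintegral_add_right' _ ((hdm.div_const _).aemeasurable)]
      at hmono
    have hA : (∫⁻ x in K, ENNReal.ofReal ((1 - Real.log t) * w x))
        = ENNReal.ofReal ((1 - Real.log t) * W) := by
      rw [← ofReal_integral_eq_lintegral_ofReal (hwK.const_mul _)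
        (hw0K.mono fun x hx => mul_nonneg hct hx), integral_const_mul]
    have hB : (∫⁻ x in K, d x / ENNReal.ofReal t) = D / ENNReal.ofReal t := by
      simp_rw [div_eq_mul_inv]
      rw [lintegral_mul_const'' _ hdm.aemeasurable]
    rw [hA, hB] at hmono
    have htne : ENNReal.ofReal t ≠ 0 := by
      simp only [ne_eq, ENNReal.ofReal_eq_zero, not_le]; exact ht0
    have hdivtop : D / ENNReal.ofReal t ≠ ⊤ := by
      simp [ENNReal.div_eq_top, hDtop, htne]
    have hreal : (1 - Real.log t) * W + N.toReal ≤ P.toReal + D.toReal / t := by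
      have h := ENNReal.toReal_mono (by
        exact ENNReal.add_ne_top.2 ⟨hPtop, hdivtop⟩) hmono
      rw [ENNReal.toReal_add ENNReal.ofReal_ne_top hNtop,
        ENNReal.toReal_add hPtop hdivtop, ENNReal.toReal_div,
        ENNReal.toReal_ofReal (mul_nonneg hct hW.le), ENNReal.toReal_ofReal ht0.le] at h
      exact h
    rw [hlt] at hreal
    have hgap : W ≤ (1 + max M 0 - M) * W := by nlinarith [le_max_left M 0]
    have h5 : (1 + max M 0 - M) * W < D.toReal / t := by linarith
    have h6 : W < D.toReal / t := lt_of_le_of_lt hgap h5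
    have hDr : t * W ≤ D.toReal := by
      have h7 : t * W ≤ t * (D.toReal / t) := mul_le_mul_of_nonneg_left h6.le ht0.le
      have h8 : t * (D.toReal / t) = D.toReal := by field_simp
      linarith
    calc ENNReal.ofReal (t * W) ≤ ENNReal.ofReal D.toReal := ENNReal.ofReal_le_ofReal hDr
      _ = D := ENNReal.ofReal_toReal hDtop
      _ ≤ μ n K := hD
  have hfreq2 : ∃ᶠ n in atTop, ENNReal.ofReal (t * W) ≤ μ n K := hfreq.mono key
  have hlimsup : ENNReal.ofReal (t * W) ≤ atTop.limsup (fun n => μ n K) :=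
    le_limsup_of_frequently_le hfreq2
  have hport : atTop.limsup (fun n => μ n K) ≤ ν K := by
    have htend := (FiniteMeasure.tendsto_iff_forall_integral_tendsto
        (μs := fun n => (⟨μ n, inferInstance⟩ : FiniteMeasure ℝ))
        (μ := ⟨ν, inferInstance⟩)).mpr hweak
    exact FiniteMeasure.limsup_measure_closed_le_of_tendsto htend hK.isClosed
  have hpos : 0 < ENNReal.ofReal (t * W) := ENNReal.ofReal_pos.2 (by positivity)
  exact lt_of_lt_of_le hpos (hlimsup.trans hport)

end
end
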